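/- Let N ≥ 1 and T ≥ 1 be integers, let ε and δ be reals with 0 < ε ≤ 1 and 0 < δ < 1, and let p be a real with 1/2 ≤ p ≤ 1. If T ≥ 54·(N/ε)²·log(2N/δ), then the binomial tail probability satisfies ∑_{x ∈ {0,…,T}, |x − Tp| > Tp·ε/(3N)} C(T,x)·p^x·(1−p)^{T−x} ≤ δ/N. -/

import Mathlib

/-!
Chernoff bound. For every `s` the exponential moment of `X ~ Bin(T, p)` is
`(1 + p (eˢ - 1))ᵀ ≤ exp (T p (eˢ - 1))`, so Markov's inequality applied to `exp (s X)` bounds each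
tail. With `s = ± c`, `0 ≤ c ≤ 1/3`, and `eˢ ≤ 1 + s + 2s²/3`, each tail beyond `Tp ± Tpc` is at most
`exp (-Tpc²/3)`. For `c = ε/(3N)` and `p ≥ 1/2` the hypothesis on `T` makes this `≤ δ/(2N)`.
-/

open Finset Real

noncomputable def binomTerm (T : ℕ) (p : ℝ) (x : ℕ) : ℝ :=
  (T.choose x : ℝ) * p ^ x * (1 - p) ^ (T - x)

lemma binomTerm_nonneg (T : ℕ) {p : ℝ} (hp0 : 0 ≤ p) (hp1 : p ≤ 1) (x : ℕ) :
    0 ≤ binomTerm T p x := by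
  unfold binomTerm
  have : 0 ≤ 1 - p := sub_nonneg.2 hp1
  positivity

lemma sum_binomTerm_mul_exp (T : ℕ) (p s : ℝ) :
    ∑ x ∈ range (T + 1), binomTerm T p x * exp (s * x) = (p * exp s + (1 - p)) ^ T := by
  rw [add_pow]
  refine sum_congr rfl fun x _ => ?_
  rw [binomTerm, mul_pow, ← exp_nat_mul, mul_comm (x : ℝ) s]
  ring

lemma sum_binomTerm_mul_exp_le (T : ℕ) {p : ℝ} (hp0 : 0 ≤ p) (hp1 : p ≤ 1) (s : ℝ) :
    ∑ x ∈ range (T + 1), binomTerm T p x * exp (s * x) ≤ exp (T * p * (exp s - 1)) := by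
  have hbase : 0 ≤ p * exp s + (1 - p) := by
    have : 0 ≤ 1 - p := sub_nonneg.2 hp1
    positivity
  calc ∑ x ∈ range (T + 1), binomTerm T p x * exp (s * x)
      = (p * exp s + (1 - p)) ^ T := sum_binomTerm_mul_exp T p s
    _ ≤ exp (p * (exp s - 1)) ^ T :=
        pow_le_pow_left₀ hbase (by linarith [add_one_le_exp (p * (exp s - 1))]) T
    _ = exp (T * p * (exp s - 1)) := by rw [← exp_nat_mul, mul_assoc]

/-- Markov's inequality for `exp (s X)`, `X ~ Bin(T, p)`. -/
lemma sum_filter_binomTerm_le_exp (T : ℕ) {p : ℝ} (hp0 : 0 ≤ p) (hp1 : p ≤ 1) {s a : ℝ}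
    (P : ℕ → Prop) [DecidablePred P] (hP : ∀ x, P x → a ≤ s * x) :
    ∑ x ∈ (range (T + 1)).filter P, binomTerm T p x ≤ exp (T * p * (exp s - 1) - a) := by
  calc ∑ x ∈ (range (T + 1)).filter P, binomTerm T p x
      ≤ ∑ x ∈ (range (T + 1)).filter P, binomTerm T p x * exp (s * x - a) := by
        refine sum_le_sum fun x hx => le_mul_of_one_le_right (binomTerm_nonneg T hp0 hp1 x) ?_
        exact one_le_exp (sub_nonneg.2 (hP x (mem_filter.1 hx).2))
    _ ≤ ∑ x ∈ range (T + 1), binomTerm T p x * exp (s * x - a) :=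
        sum_le_sum_of_subset_of_nonneg (filter_subset _ _) fun x _ _ =>
          mul_nonneg (binomTerm_nonneg T hp0 hp1 x) (exp_nonneg _)
    _ = exp (-a) * ∑ x ∈ range (T + 1), binomTerm T p x * exp (s * x) := by
        rw [mul_sum]
        refine sum_congr rfl fun x _ => ?_
        rw [sub_eq_add_neg, exp_add]
        ring
    _ ≤ exp (-a) * exp (T * p * (exp s - 1)) :=
        mul_le_mul_of_nonneg_left (sum_binomTerm_mul_exp_le T hp0 hp1 s) (exp_nonneg _)
    _ = exp (T * p * (exp s - 1) - a) := by rw [← exp_add]; ring_nf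

lemma exp_le_one_add_add_sq {x : ℝ} (hx : |x| ≤ 1 / 3) : exp x ≤ 1 + x + 2 / 3 * x ^ 2 := by
  have h := Real.exp_bound (n := 3) (hx.trans (by norm_num)) (by norm_num)
  simp only [sum_range_succ, sum_range_zero, Nat.factorial, pow_zero, pow_one] at h
  have hcube : |x| ^ 3 ≤ x ^ 2 * (1 / 3) := by
    rw [pow_succ, ← sq_abs x]
    exact mul_le_mul_of_nonneg_left hx (sq_nonneg _)
  norm_num at h
  linarith [(abs_sub_le_iff.1 h).1, sq_nonneg x]

lemma sum_filter_binomTerm_le_exp_neg_sq (T : ℕ) {p : ℝ} (hp0 : 0 ≤ p) (hp1 : p ≤ 1) {s : ℝ}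
    (hs : |s| ≤ 1 / 3) (P : ℕ → Prop) [DecidablePred P]
    (hP : ∀ x, P x → T * p * s ^ 2 ≤ s * (x - T * p)) :
    ∑ x ∈ (range (T + 1)).filter P, binomTerm T p x ≤ exp (-(T * p * s ^ 2 / 3)) := by
  refine (sum_filter_binomTerm_le_exp T hp0 hp1 (s := s) (a := s * (T * p) + T * p * s ^ 2) P
    fun x hx => by linarith [hP x hx]).trans (exp_le_exp.2 ?_)
  have hTp : 0 ≤ (T : ℝ) * p := by positivity
  nlinarith [mul_le_mul_of_nonneg_left (exp_le_one_add_add_sq hs) hTp]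

lemma sum_filter_abs_sub_binomTerm_le (T : ℕ) {p : ℝ} (hp0 : 0 ≤ p) (hp1 : p ≤ 1) {c : ℝ}
    (hc0 : 0 ≤ c) (hc1 : c ≤ 1 / 3) :
    ∑ x ∈ (range (T + 1)).filter (fun x : ℕ => T * p * c < |(x : ℝ) - T * p|), binomTerm T p x
      ≤ 2 * exp (-(T * p * c ^ 2 / 3)) := by
  have hTpc : 0 ≤ (T : ℝ) * p * c := by positivity
  have hsplit : (range (T + 1)).filter (fun x : ℕ => T * p * c < |(x : ℝ) - T * p|)
      = (range (T + 1)).filter (fun x : ℕ => T * p * c < (x : ℝ) - T * p)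
        ∪ (range (T + 1)).filter (fun x : ℕ => T * p * c < -((x : ℝ) - T * p)) := by
    rw [← filter_or]
    exact filter_congr fun x _ => lt_abs
  have hdisj : Disjoint ((range (T + 1)).filter (fun x : ℕ => T * p * c < (x : ℝ) - T * p))
      ((range (T + 1)).filter (fun x : ℕ => T * p * c < -((x : ℝ) - T * p))) :=
    disjoint_filter.2 fun x _ h₁ h₂ => by linarith
  rw [hsplit, sum_union hdisj, two_mul]
  gcongr
  · exact sum_filter_binomTerm_le_exp_neg_sq T hp0 hp1 (abs_le.2 ⟨by linarith, hc1⟩) _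
      fun x hx => by nlinarith
  · rw [← neg_sq c]
    exact sum_filter_binomTerm_le_exp_neg_sq T hp0 hp1
      (by rw [abs_neg]; exact abs_le.2 ⟨by linarith, hc1⟩) _ fun x hx => by nlinarith

theorem stmt14_general (N T : ℕ) (hN : 1 ≤ N) (ε δ p : ℝ)
    (hε0 : 0 < ε) (hε1 : ε ≤ 1) (hδ0 : 0 < δ)
    (hp0 : 1 / 2 ≤ p) (hp1 : p ≤ 1)
    (hTbig : 54 * ((N : ℝ) / ε) ^ 2 * Real.log (2 * N / δ) ≤ (T : ℝ)) :
    ((Finset.range (T + 1)).filter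
        (fun x : ℕ => (T : ℝ) * p * (ε / (3 * N)) < |(x : ℝ) - (T : ℝ) * p|)).sum
      (fun x : ℕ => (T.choose x : ℝ) * p ^ x * (1 - p) ^ (T - x)) ≤ δ / N := by
  set c := ε / (3 * N) with hc
  have hN1 : (1 : ℝ) ≤ N := by exact_mod_cast hN
  have hc1 : c ≤ 1 / 3 := by
    rw [hc, div_le_div_iff₀ (by positivity) (by norm_num)]
    linarith
  have hlog : log (2 * N / δ) ≤ T * p * c ^ 2 / 3 := by
    have hcoef : 54 * ((N : ℝ) / ε) ^ 2 * (c ^ 2 / 6) = 1 := by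
      rw [hc]; field_simp; ring
    calc log (2 * N / δ) = 54 * ((N : ℝ) / ε) ^ 2 * log (2 * N / δ) * (c ^ 2 / 6) := by
          linear_combination (-log (2 * N / δ)) * hcoef
      _ ≤ T * (c ^ 2 / 6) := mul_le_mul_of_nonneg_right hTbig (by positivity)
      _ ≤ T * p * c ^ 2 / 3 := by
          nlinarith [mul_le_mul_of_nonneg_left hp0 (by positivity : (0 : ℝ) ≤ T * c ^ 2)]
  have htail : exp (-(T * p * c ^ 2 / 3)) ≤ δ / (2 * N) := by
    calc exp (-(T * p * c ^ 2 / 3)) ≤ exp (-log (2 * N / δ)) := exp_le_exp.2 (neg_le_neg hlog)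
      _ = δ / (2 * N) := by rw [exp_neg, exp_log (by positivity), inv_div]
  calc _ ≤ 2 * exp (-(T * p * c ^ 2 / 3)) :=
        sum_filter_abs_sub_binomTerm_le T (by linarith) hp1 (by positivity) hc1
    _ ≤ 2 * (δ / (2 * N)) := by gcongr
    _ = δ / N := by field_simp

/-- Let `N, T ≥ 1` be integers, `0 < ε ≤ 1`, `0 < δ < 1`, and
`1/2 ≤ p ≤ 1`. If `T ≥ 54 * (N/ε)² * log(2N/δ)`, then the probability that a binomial
random variable with `T` trials and success probability `p` deviates from its mean `Tp`
by more than `Tp * ε/(3N)` is at most `δ/N`: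
`∑_{x ∈ {0,…,T}, |x - Tp| > Tp·ε/(3N)} C(T,x) p^x (1-p)^{T-x} ≤ δ/N`. -/
theorem stmt14 (N T : ℕ) (hN : 1 ≤ N) (hT : 1 ≤ T) (ε δ p : ℝ)
    (hε0 : 0 < ε) (hε1 : ε ≤ 1) (hδ0 : 0 < δ) (hδ1 : δ < 1)
    (hp0 : 1 / 2 ≤ p) (hp1 : p ≤ 1)
    (hTbig : 54 * ((N : ℝ) / ε) ^ 2 * Real.log (2 * N / δ) ≤ (T : ℝ)) :
    ((Finset.range (T + 1)).filter
        (fun x : ℕ => (T : ℝ) * p * (ε / (3 * N)) < |(x : ℝ) - (T : ℝ) * p|)).sum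
      (fun x : ℕ => (T.choose x : ℝ) * p ^ x * (1 - p) ^ (T - x)) ≤ δ / N :=
  stmt14_general N T hN ε δ p hε0 hε1 hδ0 hp0 hp1 hTbig
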